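/- arXiv:math/0312153 — 3 statements merged into one kernel-verified Lean document; each statement's English description precedes it below -/
import Mathlib

section
/- (Rhemtulla) Let G = A * B be a free product, a ∈ A of order ≥ 3, and t_k(g) = d_k(g) − d*_k(g) where d_k (resp. d*_k) counts a-segments (resp. a⁻¹-segments) of length 2k+1 in the reduced form of g. Then for any fixed g, h ∈ G, the equality t_k(gh) = t_k(g) + t_k(h) holds for all but at most 9 natural numbers k. -/
/-!
Write the reduced words of `g` and `h` as `p x r` and `r⁻¹ y q`, where `r` is what cancels in
`g * h` and `x`, `y` are empty or single syllables of one factor; then the reduced word of `g * h`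
is `p z q` with `z` of length at most one. Cutting a word `u v w` with `|v| ≤ 1` into `u` and `w`
loses only the segments crossing one of the two cuts. Each cut is crossed by at most one
`s`-segment for each syllable `s`, and only one of `a`, `a⁻¹` can cross the cut at `v`, so `t_k` is
additive over the decomposition for all but three `k`. Inverting a word reverses it and swaps `a`
with `a⁻¹`, hence `t_k(r⁻¹) = -t_k(r)`, and the three decompositions of `g`, `h`, `g * h` leave at
most nine exceptions.
-/

open Monoid Monoid.CoprodI

attribute [local instance] Classical.propDecidable

/-- The list of syllables of the reduced word representing `g`. -/
noncomputable def syllables {ι : Type*} {M : ι → Type*} [∀ i, Group (M i)]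
    (g : CoprodI M) : List (Σ i, M i) :=
  letI := Classical.decEq ι
  letI : ∀ i, DecidableEq (M i) := fun _ => Classical.decEq _
  (Word.equiv g).toList

/-- `g` is a palindrome iff its reduced word reads the same backwards. -/
noncomputable def IsPalindrome {ι : Type*} {M : ι → Type*} [∀ i, Group (M i)]
    (g : CoprodI M) : Prop :=
  (syllables g).reverse = syllables g

/-- `segCount s k g` is the number of `s`-segments of syllable length `2k+1`
in the reduced form of `g`: pairs of consecutive occurrences of the syllable `s`
at distance `2k+2` in the syllable list. -/
noncomputable def segCount {ι : Type*} {M : ι → Type*} [∀ i, Group (M i)]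
    (s : Σ i, M i) (k : ℕ) (g : CoprodI M) : ℕ :=
  ((Finset.range (syllables g).length ×ˢ Finset.range (syllables g).length).filter
    (fun pq => pq.1 < pq.2 ∧ (syllables g)[pq.1]? = some s ∧ (syllables g)[pq.2]? = some s ∧
      (∀ r ∈ Finset.Ioo pq.1 pq.2, (syllables g)[r]? ≠ some s) ∧ pq.2 - pq.1 = 2*k+2)).card

namespace List

variable {α β : Type*} {s s' : α} {k i j : ℕ} {L p q r x : List α}

def IsSegment (s : α) (k : ℕ) (L : List α) (i j : ℕ) : Prop :=
  i < j ∧ L[i]? = some s ∧ L[j]? = some s ∧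
    (∀ r ∈ Finset.Ioo i j, L[r]? ≠ some s) ∧ j - i = 2 * k + 2

noncomputable def segments (s : α) (k : ℕ) (L : List α) : Finset (ℕ × ℕ) :=
  (Finset.range L.length ×ˢ Finset.range L.length).filter fun ij => L.IsSegment s k ij.1 ij.2

theorem IsSegment.lt_length (h : L.IsSegment s k i j) : j < L.length :=
  (getElem?_eq_some_iff.mp h.2.2.1).1

@[simp]
theorem mem_segments {ij : ℕ × ℕ} : ij ∈ L.segments s k ↔ L.IsSegment s k ij.1 ij.2 := by
  simp only [segments, Finset.mem_filter, Finset.mem_product, Finset.mem_range,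
    and_iff_right_iff_imp]
  exact fun h => ⟨h.1.trans h.lt_length, h.lt_length⟩

theorem segments_eq_empty_of_length_le_one (hL : L.length ≤ 1) : L.segments s k = ∅ := by
  ext ⟨i, j⟩
  simp only [mem_segments, Finset.notMem_empty, iff_false]
  intro h
  have := h.lt_length
  have := h.1
  omega

theorem IsSegment.congr {L' : List α} (hL : L.IsSegment s k i j)
    (h : ∀ r, i ≤ r → r ≤ j → L[r]? = L'[r]?) : L'.IsSegment s k i j := by
  obtain ⟨hij, hi, hj, hbetween, hk⟩ := hL
  refine ⟨hij, h i le_rfl hij.le ▸ hi, h j hij.le le_rfl ▸ hj, fun r hr => ?_, hk⟩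
  obtain ⟨hir, hrj⟩ := Finset.mem_Ioo.mp hr
  rw [← h r hir.le hrj.le]
  exact hbetween r hr

theorem isSegment_append_left (hj : j < p.length) :
    (p ++ q).IsSegment s k i j ↔ p.IsSegment s k i j :=
  ⟨fun h => h.congr fun r _ hr => getElem?_append_left (by omega),
    fun h => h.congr fun r _ hr => (getElem?_append_left (by omega)).symm⟩

theorem isSegment_append_right_add :
    (p ++ q).IsSegment s k (i + p.length) (j + p.length) ↔ q.IsSegment s k i j := by
  have shift : ∀ r, (p ++ q)[r + p.length]? = q[r]? := fun r => by
    rw [getElem?_append_right (by omega), Nat.add_sub_cancel]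
  simp only [IsSegment, shift, Finset.mem_Ioo, Nat.add_sub_add_right, Nat.add_lt_add_iff_right]
  refine and_congr_right fun _ => and_congr_right fun _ => and_congr_right fun _ =>
    and_congr_left fun _ => ⟨fun h r hr => shift r ▸ h _ (by omega), fun h r hr => ?_⟩
  obtain ⟨r, rfl⟩ := Nat.exists_eq_add_of_le' (show p.length ≤ r by omega)
  exact shift r ▸ h r (by omega)

def CrossesAt (s : α) (k : ℕ) (p q : List α) : Prop :=
  ∃ i j, i < p.length ∧ p.length ≤ j ∧ (p ++ q).IsSegment s k i j

theorem setOf_crossesAt_subsingleton : {k | CrossesAt s k p q}.Subsingleton := by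
  rintro k ⟨i, j, hi, hj, hij, hsi, hsj, hbet, hk⟩
    k' ⟨i', j', hi', hj', hij', hsi', hsj', hbet', hk'⟩
  have hii' : i = i' := by
    by_contra hne
    rcases Nat.lt_or_gt_of_ne hne with hlt | hlt
    · exact hbet i' (Finset.mem_Ioo.mpr (by omega)) hsi'
    · exact hbet' i (Finset.mem_Ioo.mpr (by omega)) hsi
  have hjj' : j = j' := by
    by_contra hne
    rcases Nat.lt_or_gt_of_ne hne with hlt | hlt
    · exact hbet' j (Finset.mem_Ioo.mpr (by omega)) hsj
    · exact hbet j' (Finset.mem_Ioo.mpr (by omega)) hsj'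
  omega

theorem not_crossesAt_of_notMem (h : s ∉ q) : ¬CrossesAt s k p q := by
  rintro ⟨i, j, -, hj, -, -, hsj, -⟩
  rw [getElem?_append_right hj] at hsj
  exact h (mem_of_getElem? hsj)

theorem segments_append (h : ¬CrossesAt s k p q) :
    (p ++ q).segments s k = p.segments s k ∪
      (q.segments s k).map ((addRightEmbedding p.length).prodMap (addRightEmbedding p.length)) := by
  ext ⟨i, j⟩
  simp only [Finset.mem_union, mem_segments, Finset.mem_map, Prod.exists,
    Function.Embedding.coe_prodMap, Prod.map_apply, addRightEmbedding_apply, Prod.mk.injEq]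
  constructor
  · intro hs
    by_cases hj : j < p.length
    · exact Or.inl ((isSegment_append_left hj).mp hs)
    · have hi : p.length ≤ i := by
        by_contra hi
        exact h ⟨i, j, by omega, by omega, hs⟩
      obtain ⟨a, rfl⟩ := Nat.exists_eq_add_of_le' hi
      obtain ⟨b, rfl⟩ := Nat.exists_eq_add_of_le' (show p.length ≤ j by omega)
      exact Or.inr ⟨a, b, isSegment_append_right_add.mp hs, rfl, rfl⟩
  · rintro (hs | ⟨a, b, hs, rfl, rfl⟩)
    · exact (isSegment_append_left hs.lt_length).mpr hs
    · exact isSegment_append_right_add.mpr hs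

theorem card_segments_append (h : ¬CrossesAt s k p q) :
    ((p ++ q).segments s k).card = (p.segments s k).card + (q.segments s k).card := by
  rw [segments_append h, Finset.card_union_of_disjoint, Finset.card_map]
  rw [Finset.disjoint_left]
  rintro ⟨i, j⟩ hp hq
  simp only [Finset.mem_map, Prod.exists, Function.Embedding.coe_prodMap, Prod.map_apply,
    addRightEmbedding_apply, Prod.mk.injEq, mem_segments] at hp hq
  obtain ⟨a, b, -, -, rfl⟩ := hq
  have := hp.lt_length
  omega

theorem segments_map {f : α → β} (hf : Function.Injective f) :
    (L.map f).segments (f s) k = L.segments s k := by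
  have key : ∀ r : ℕ, (L.map f)[r]? = some (f s) ↔ L[r]? = some s := fun r => by
    simp [Option.map_eq_some_iff, hf.eq_iff]
  ext ⟨i, j⟩
  simp only [mem_segments, IsSegment, ne_eq, key]

theorem IsSegment.reverse (h : L.IsSegment s k i j) :
    L.reverse.IsSegment s k (L.length - 1 - j) (L.length - 1 - i) := by
  obtain ⟨hij, hsi, hsj, hbet, hk⟩ := h
  have hj : j < L.length := (getElem?_eq_some_iff.mp hsj).1
  have flip : ∀ r < L.length, L.reverse[L.length - 1 - r]? = L[r]? := fun r hr => by
    rw [getElem?_reverse (by omega)]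
    congr 1
    omega
  refine ⟨by omega, flip j hj ▸ hsj, flip i (by omega) ▸ hsi, fun r hr => ?_, by omega⟩
  obtain ⟨hr1, hr2⟩ := Finset.mem_Ioo.mp hr
  rw [getElem?_reverse (by omega)]
  exact hbet _ (Finset.mem_Ioo.mpr (by omega))

theorem card_segments_reverse : (L.reverse.segments s k).card = (L.segments s k).card := by
  set σ : ℕ × ℕ → ℕ × ℕ := fun ij => (L.length - 1 - ij.2, L.length - 1 - ij.1)
  have hσ : ∀ {L' : List α}, L'.length = L.length → Set.LeftInvOn σ σ (L'.segments s k) := by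
    rintro L' hL' ⟨i, j⟩ hs
    have := (mem_segments.mp hs).lt_length
    have := (mem_segments.mp hs).1
    simp only [σ, Prod.mk.injEq]
    omega
  refine Finset.card_nbij' σ σ (fun ij hs => ?_) (fun ij hs => ?_) (hσ length_reverse) (hσ rfl)
  · simpa [σ] using (mem_segments.mp hs).reverse
  · simpa [σ] using (mem_segments.mp hs).reverse

noncomputable def segmentDiff (s s' : α) (k : ℕ) (L : List α) : ℤ :=
  (L.segments s k).card - (L.segments s' k).card

theorem setOf_crossesAt_union_subsingleton (hss : s ≠ s') (hx : x.length ≤ 1) :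
    ({k | CrossesAt s k p x} ∪ {k | CrossesAt s' k p x}).Subsingleton := by
  have : s ∉ x ∨ s' ∉ x := by
    rcases x with _ | ⟨c, _ | _⟩
    · simp
    · by_contra! h
      simp only [mem_singleton] at h
      exact hss (h.1.trans h.2.symm)
    · simp at hx
  rcases this with h | h
  · simpa [not_crossesAt_of_notMem h] using setOf_crossesAt_subsingleton
  · simpa [not_crossesAt_of_notMem h] using setOf_crossesAt_subsingleton

theorem encard_setOf_segmentDiff_append_ne_le_three (hx : x.length ≤ 1) :
    {k | (p ++ x ++ r).segmentDiff s s' k ≠ p.segmentDiff s s' k + r.segmentDiff s s' k}.encard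
      ≤ 3 := by
  rcases eq_or_ne s s' with rfl | hss
  · simp [segmentDiff]
  calc _ ≤ ({k | CrossesAt s k (p ++ x) r} ∪ {k | CrossesAt s' k (p ++ x) r} ∪
          ({k | CrossesAt s k p x} ∪ {k | CrossesAt s' k p x})).encard := by
        refine Set.encard_mono fun k hk => ?_
        by_contra hcross
        simp only [Set.mem_union, not_or] at hcross
        obtain ⟨⟨h₁, h₂⟩, h₃, h₄⟩ := hcross
        apply hk
        simp only [segmentDiff, card_segments_append h₁, card_segments_append h₂,
          card_segments_append h₃, card_segments_append h₄,
          segments_eq_empty_of_length_le_one hx, Finset.card_empty]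
        push_cast
        ring
    _ ≤ 1 + 1 + 1 := by
        refine (Set.encard_union_le _ _).trans (add_le_add ((Set.encard_union_le _ _).trans
          (add_le_add ?_ ?_)) ?_) <;> rw [Set.encard_le_one_iff_subsingleton]
        · exact setOf_crossesAt_subsingleton
        · exact setOf_crossesAt_subsingleton
        · exact setOf_crossesAt_union_subsingleton hss hx
    _ = 3 := by norm_num

end List

section Syllables

open List

variable {ι : Type*} {M : ι → Type*} [∀ i, Group (M i)]

def invSyllable (c : Σ i, M i) : Σ i, M i := ⟨c.1, c.2⁻¹⟩

theorem invSyllable_involutive : Function.Involutive (invSyllable (M := M)) :=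
  fun ⟨i, m⟩ => by rw [invSyllable, invSyllable, inv_inv]

def invWord (L : List (Σ i, M i)) : List (Σ i, M i) := (L.map invSyllable).reverse

theorem segmentDiff_invWord (s : Σ i, M i) (k : ℕ) (L : List (Σ i, M i)) :
    (invWord L).segmentDiff s (invSyllable s) k = -L.segmentDiff s (invSyllable s) k := by
  have hcard : ∀ c, ((invWord L).segments (invSyllable c) k).card = (L.segments c k).card :=
    fun c => by rw [invWord, card_segments_reverse, segments_map invSyllable_involutive.injective]
  have hs := hcard (invSyllable s)
  rw [invSyllable_involutive s] at hs
  simp only [segmentDiff, hs, hcard]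
  ring

theorem segCount_eq_card_segments (s : Σ i, M i) (k : ℕ) (g : CoprodI M) :
    segCount s k g = ((syllables g).segments s k).card :=
  congrArg Finset.card (Finset.filter_congr fun _ _ => Iff.rfl)

theorem syllables_eq_toList [DecidableEq ι] [∀ i, DecidableEq (M i)] (g : CoprodI M) :
    syllables g = (Word.equiv g).toList := by
  unfold syllables
  congr <;> exact Subsingleton.elim _ _

theorem syllables_prod (w : Word M) : syllables w.prod = w.toList := by
  classical
  rw [syllables_eq_toList]
  exact congrArg Word.toList (Word.equiv.apply_symm_apply w)

theorem exists_word_prod_eq (g : CoprodI M) : ∃ w : Word M, w.prod = g := by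
  classical
  exact ⟨Word.equiv g, Word.equiv.symm_apply_apply g⟩

theorem syllables_of_mul {i : ι} {m : M i} (hm : m ≠ 1) {x : CoprodI M}
    (hx : (syllables x).head?.map Sigma.fst ≠ some i) :
    syllables (of m * x) = ⟨i, m⟩ :: syllables x := by
  obtain ⟨w, rfl⟩ := exists_word_prod_eq x
  rw [syllables_prod] at hx ⊢
  rw [← Word.prod_cons i m w hm hx, syllables_prod]
  rfl

theorem exists_eq_of_mul_of_syllables_eq_cons {i : ι} {y : M i} {t : List (Σ i, M i)}
    {x : CoprodI M} (hx : syllables x = ⟨i, y⟩ :: t) :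
    ∃ x', x = of y * x' ∧ syllables x' = t ∧ t.head?.map Sigma.fst ≠ some i := by
  obtain ⟨w, rfl⟩ := exists_word_prod_eq x
  rw [syllables_prod] at hx
  have hchain := w.chain_ne
  rw [hx, isChain_cons] at hchain
  let w' : Word M := ⟨t, fun c hc => w.ne_one c (hx ▸ mem_cons_of_mem _ hc), hchain.2⟩
  have hfst : w'.fstIdx ≠ some i := Word.fstIdx_ne_iff.mpr hchain.1
  have hy : y ≠ 1 := w.ne_one ⟨i, y⟩ (hx ▸ mem_cons_self)
  refine ⟨w'.prod, ?_, syllables_prod w', hfst⟩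
  rw [← Word.prod_cons i y w' hy hfst]
  congr 1
  exact Word.ext hx

theorem syllables_of_mul_of_syllables_eq_cons {i : ι} (m : M i) {y : M i}
    {t : List (Σ i, M i)} {x : CoprodI M} (hx : syllables x = ⟨i, y⟩ :: t) :
    syllables (of m * x) = if m * y = 1 then t else ⟨i, m * y⟩ :: t := by
  obtain ⟨x', rfl, hx', hfst⟩ := exists_eq_of_mul_of_syllables_eq_cons hx
  rw [← mul_assoc, ← map_mul]
  split_ifs with hmy
  · rw [hmy, map_one, one_mul, hx']
  · rw [syllables_of_mul hmy (hx' ▸ hfst), hx']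

end Syllables

section MulSplitting

open List

variable {ι : Type*} {M : ι → Type*} [∀ i, Group (M i)]

/-- The reduced word of `g * h` arises from those of `g = p x r` and `h = r⁻¹ y q` by cancelling
`r` against `r⁻¹` and merging the syllables `x`, `y` of one factor (or none) into `z`. -/
def MulSplitting (Lg Lh Lgh : List (Σ i, M i)) : Prop :=
  ∃ p x r y q z : List (Σ i, M i), Lg = p ++ x ++ r ∧ Lh = invWord r ++ y ++ q ∧
    Lgh = p ++ z ++ q ∧ x.length ≤ 1 ∧ y.map Sigma.fst = x.map Sigma.fst ∧
    z.map Sigma.fst = x.map Sigma.fst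

theorem mulSplitting_nil (L : List (Σ i, M i)) : MulSplitting [] L L :=
  ⟨[], [], [], [], L, [], rfl, rfl, rfl, by simp, rfl, rfl⟩

theorem mulSplitting_cons_of_syllables_eq {i : ι} {m : M i} (hm : m ≠ 1)
    (r : List (Σ i, M i)) {x : CoprodI M} :
    MulSplitting (⟨i, m⟩ :: r) (invWord r ++ syllables x) (syllables (of m * x)) := by
  match hx : syllables x with
  | [] =>
    rw [syllables_of_mul hm (by simp [hx]), hx]
    exact ⟨[⟨i, m⟩], [], r, [], [], [], rfl, by simp, rfl, by simp, rfl, rfl⟩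
  | ⟨j, y⟩ :: q =>
    by_cases hji : j = i
    · subst hji
      rw [syllables_of_mul_of_syllables_eq_cons m hx]
      split_ifs with hmy
      · refine ⟨[], [], ⟨j, m⟩ :: r, [], q, [], rfl, ?_, rfl, by simp, rfl, rfl⟩
        simp [invWord, invSyllable, eq_inv_of_mul_eq_one_right hmy]
      · exact ⟨[], [⟨j, m⟩], r, [⟨j, y⟩], q, [⟨j, m * y⟩], rfl, by simp, rfl, by simp, rfl, rfl⟩
    · rw [syllables_of_mul hm (by simp [hx, hji]), hx]
      exact ⟨[⟨i, m⟩], [], r, [], ⟨j, y⟩ :: q, [], rfl, by simp, rfl, by simp, rfl, rfl⟩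

theorem MulSplitting.of_mul {g h : CoprodI M}
    (hs : MulSplitting (syllables g) (syllables h) (syllables (g * h))) {i : ι} {m : M i}
    (hm : m ≠ 1) (hg : (syllables g).head?.map Sigma.fst ≠ some i) :
    MulSplitting (syllables (of m * g)) (syllables h) (syllables (of m * g * h)) := by
  obtain ⟨p, x, r, y, q, z, hg', hh, hgh, hx, hy, hz⟩ := hs
  rw [syllables_of_mul hm hg, mul_assoc]
  by_cases hpx : p ++ x = []
  · obtain ⟨rfl, rfl⟩ := append_eq_nil_iff.mp hpx
    obtain rfl : y = [] := by simpa using hy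
    obtain rfl : z = [] := by simpa using hz
    simp only [nil_append, append_nil] at hg' hh hgh
    rw [hg', hh, ← hgh]
    exact mulSplitting_cons_of_syllables_eq hm r
  · have hne : p.map Sigma.fst ++ x.map Sigma.fst ≠ [] := by simpa using hpx
    have hhead : (syllables (g * h)).head?.map Sigma.fst = (syllables g).head?.map Sigma.fst := by
      rw [hgh, hg', ← head?_map, ← head?_map, map_append, map_append, map_append, map_append, hz,
        head?_append_of_ne_nil _ hne, head?_append_of_ne_nil _ hne]
    rw [syllables_of_mul hm (hhead ▸ hg)]
    exact ⟨⟨i, m⟩ :: p, x, r, y, q, z, by simp [hg'], hh, by simp [hgh], hx, hy, hz⟩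

theorem mulSplitting_syllables (g h : CoprodI M) :
    MulSplitting (syllables g) (syllables h) (syllables (g * h)) := by
  obtain ⟨w, rfl⟩ := exists_word_prod_eq g
  induction w using Word.consRecOn with
  | empty =>
    rw [syllables_prod, Word.prod_empty, one_mul]
    exact mulSplitting_nil _
  | cons i m w hw hm ih =>
    rw [Word.prod_cons]
    exact ih.of_mul hm (by rwa [syllables_prod])

theorem encard_setOf_segmentDiff_mul_ne_le_nine (s : Σ i, M i) (g h : CoprodI M) :
    {k | (syllables (g * h)).segmentDiff s (invSyllable s) k ≠
      (syllables g).segmentDiff s (invSyllable s) k +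
        (syllables h).segmentDiff s (invSyllable s) k}.encard ≤ 9 := by
  obtain ⟨p, x, r, y, q, z, hg, hh, hgh, hx, hy, hz⟩ := mulSplitting_syllables g h
  have hlen {u : List (Σ i, M i)} (hu : u.map Sigma.fst = x.map Sigma.fst) : u.length ≤ 1 := by
    simpa using (congrArg length hu).trans_le (by simpa using hx)
  set E : List (Σ i, M i) → List (Σ i, M i) → List (Σ i, M i) → Set ℕ := fun u v w =>
    {k | (u ++ v ++ w).segmentDiff s (invSyllable s) k ≠
      u.segmentDiff s (invSyllable s) k + w.segmentDiff s (invSyllable s) k}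
  have hE (u v w) (hv : v.length ≤ 1) : (E u v w).encard ≤ 3 :=
    encard_setOf_segmentDiff_append_ne_le_three hv
  calc _ ≤ (E p x r ∪ E (invWord r) y q ∪ E p z q).encard := by
        refine Set.encard_mono fun k hk => ?_
        by_contra hmem
        simp only [Set.mem_union, not_or, E, Set.mem_ofPred_eq, not_not] at hmem
        obtain ⟨⟨h₁, h₂⟩, h₃⟩ := hmem
        apply hk
        rw [hg, hh, hgh, h₁, h₂, h₃, segmentDiff_invWord]
        ring
    _ ≤ 3 + 3 + 3 := (Set.encard_union_le _ _).trans <| add_le_add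
        ((Set.encard_union_le _ _).trans (add_le_add (hE _ _ _ hx) (hE _ _ _ (hlen hy))))
        (hE _ _ _ (hlen hz))
    _ = 9 := by norm_num

end MulSplitting

theorem t_additive_except_nine_general {M : Bool → Type*} [∀ b, Group (M b)]
    (a : M true) (g h : CoprodI M) :
    letI t : ℕ → CoprodI M → ℤ := fun k x =>
      (segCount ⟨true, a⟩ k x : ℤ) - segCount ⟨true, a⁻¹⟩ k x
    {k : ℕ | t k (g * h) ≠ t k g + t k h}.encard ≤ 9 := by
  simpa only [segCount_eq_card_segments, List.segmentDiff, invSyllable] using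
    encard_setOf_segmentDiff_mul_ne_le_nine ⟨true, a⟩ g h

/-- Rhemtulla's lemma: for fixed `g, h`, the equality
`t_k(gh) = t_k(g) + t_k(h)` holds for all but at most 9 naturals `k`. -/
theorem t_additive_except_nine {M : Bool → Type*} [∀ b, Group (M b)]
    [Nontrivial (M true)] [Nontrivial (M false)]
    (a : M true) (ha1 : a ≠ 1) (ha2 : a ≠ a⁻¹) (g h : CoprodI M) :
    letI t : ℕ → CoprodI M → ℤ := fun k x =>
      (segCount ⟨true, a⟩ k x : ℤ) - segCount ⟨true, a⁻¹⟩ k x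
    {k : ℕ | t k (g * h) ≠ t k g + t k h}.encard ≤ 9 :=
  t_additive_except_nine_general a g h
end

section
/- If g is a palindrome (or more generally an {a,c}-palindrome) in G = A * B, then d_{m,n}(g) = d_{n,m}(g) for all m ≠ n, hence Δ₂(g) = 0. -/
open Monoid Monoid.CoprodI

attribute [local instance] Classical.propDecidable

/-- `segCount2 sa sc m n g` is the number of `a`-segments of type `(m,n)` in the
reduced form of `g`: triples `p < r < q` where `p, q` are consecutive occurrences
of the syllable `sa`, `r` is the unique occurrence of the syllable `sc` strictly
between them, with `m` syllables before `sc` and `n` syllables after it. -/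
noncomputable def segCount2 {ι : Type*} {M : ι → Type*} [∀ i, Group (M i)]
    (sa sc : Σ i, M i) (m n : ℕ) (g : CoprodI M) : ℕ :=
  (((Finset.range (syllables g).length ×ˢ Finset.range (syllables g).length) ×ˢ
      Finset.range (syllables g).length).filter
    (fun t => t.1.1 < t.1.2 ∧ t.1.2 < t.2 ∧
      (syllables g)[t.1.1]? = some sa ∧ (syllables g)[t.2]? = some sa ∧
      (syllables g)[t.1.2]? = some sc ∧
      (∀ u ∈ Finset.Ioo t.1.1 t.2, (syllables g)[u]? ≠ some sa) ∧
      (∀ u ∈ Finset.Ioo t.1.1 t.2, u ≠ t.1.2 → (syllables g)[u]? ≠ some sc) ∧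
      t.1.2 - t.1.1 = m + 1 ∧ t.2 - t.1.2 = n + 1)).card


/-- The quasi-homomorphism `Δ₂(g) = Σ_{m<n} t_{m,n}(g)` (a finite sum), where
`t_{m,n} = d_{m,n} - d_{n,m}`. -/
noncomputable def Delta2 {ι : Type*} {M : ι → Type*} [∀ i, Group (M i)]
    (sa sc : Σ i, M i) (g : CoprodI M) : ℤ :=
  ∑ᶠ p : ℕ × ℕ, if p.1 < p.2 then
    (segCount2 sa sc p.1 p.2 g : ℤ) - segCount2 sa sc p.2 p.1 g else 0

/-- A reduced word is a `C`-palindrome if the occurrences of syllables from `C`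
are placed symmetrically, with equal values at mirrored positions. -/
noncomputable def IsCPalindrome {ι : Type*} {M : ι → Type*} [∀ i, Group (M i)]
    (C : Set (Σ i, M i)) (g : CoprodI M) : Prop :=
  ∀ (n : ℕ), ∀ x ∈ C, (syllables g)[n]? = some x ↔ (syllables g).reverse[n]? = some x

/-!
Reversing the reduced word maps an `a`-segment of type `(m,n)` at positions `p < r < q` to one of
type `(n,m)` at the mirrored positions `L-1-q < L-1-r < L-1-p`. Since segments only see where the
syllables `a` and `c` occur, and an `{a,c}`-palindrome has these occurrences in the same places as
its reverse, the two counts agree.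
-/

open Finset

section

variable {α : Type*} [DecidableEq α]

def segments (l : List α) (sa sc : α) (m n : ℕ) : Finset ((ℕ × ℕ) × ℕ) :=
  filter
    (fun t => t.1.1 < t.1.2 ∧ t.1.2 < t.2 ∧
      l[t.1.1]? = some sa ∧ l[t.2]? = some sa ∧ l[t.1.2]? = some sc ∧
      (∀ u ∈ Ioo t.1.1 t.2, l[u]? ≠ some sa) ∧
      (∀ u ∈ Ioo t.1.1 t.2, u ≠ t.1.2 → l[u]? ≠ some sc) ∧
      t.1.2 - t.1.1 = m + 1 ∧ t.2 - t.1.2 = n + 1)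
    ((range l.length ×ˢ range l.length) ×ˢ range l.length)

def mirrorTriple (L : ℕ) (t : (ℕ × ℕ) × ℕ) : (ℕ × ℕ) × ℕ :=
  ((L - 1 - t.2, L - 1 - t.1.2), L - 1 - t.1.1)

theorem segments_congr {l l' : List α} {sa sc : α} (hlen : l.length = l'.length)
    (hpos : ∀ k : ℕ, ∀ x ∈ ({sa, sc} : Set α), l[k]? = some x ↔ l'[k]? = some x) (m n : ℕ) :
    segments l sa sc m n = segments l' sa sc m n := by
  have ha := (hpos · sa (Set.mem_insert _ _))
  have hc := (hpos · sc (Set.mem_insert_of_mem _ rfl))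
  simp only [segments, hlen, ha, hc, ne_eq]

theorem mirrorTriple_mem_segments_reverse {l : List α} {sa sc : α} {m n : ℕ}
    {t : (ℕ × ℕ) × ℕ} (ht : t ∈ segments l sa sc m n) :
    mirrorTriple l.length t ∈ segments l.reverse sa sc n m := by
  obtain ⟨⟨p, r⟩, q⟩ := t
  simp only [segments, mirrorTriple, mem_filter, mem_product, mem_range, mem_Ioo,
    List.length_reverse] at ht ⊢
  obtain ⟨⟨⟨hp, hr⟩, hq⟩, hpr, hrq, hpa, hqa, hrc, hnoa, hnoc, hm, hn⟩ := ht
  have mirror : ∀ {i}, i < l.length → l.reverse[l.length - 1 - i]? = l[i]? :=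
    fun hi => List.getElem?_reverse' (by omega)
  refine ⟨⟨⟨by omega, by omega⟩, by omega⟩, by omega, by omega, by rwa [mirror hq],
    by rwa [mirror hp], by rwa [mirror hr], fun u hu => ?_, fun u hu hur => ?_, by omega, by omega⟩
  · rw [List.getElem?_reverse (by omega)]
    exact hnoa _ (by omega)
  · rw [List.getElem?_reverse (by omega)]
    exact hnoc _ (by omega) (by omega)

theorem mirrorTriple_mirrorTriple {l : List α} {sa sc : α} {m n : ℕ} {t : (ℕ × ℕ) × ℕ}
    (ht : t ∈ segments l sa sc m n) : mirrorTriple l.length (mirrorTriple l.length t) = t := by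
  obtain ⟨⟨p, r⟩, q⟩ := t
  simp only [segments, mem_filter, mem_product, mem_range] at ht
  simp only [mirrorTriple, Prod.mk.injEq]
  omega

theorem card_segments_reverse (l : List α) (sa sc : α) (m n : ℕ) :
    (segments l.reverse sa sc m n).card = (segments l sa sc n m).card := by
  refine card_nbij' (mirrorTriple l.length) (mirrorTriple l.length) (fun t ht => ?_)
    (fun t ht => mirrorTriple_mem_segments_reverse ht) (fun t ht => ?_)
    (fun t ht => mirrorTriple_mirrorTriple ht)
  · simpa using mirrorTriple_mem_segments_reverse ht
  · simpa using mirrorTriple_mirrorTriple (mem_coe.mp ht)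

end

theorem segCount2_eq_card_segments {ι : Type*} {M : ι → Type*} [∀ i, Group (M i)]
    (sa sc : Σ i, M i) (m n : ℕ) (g : CoprodI M) :
    segCount2 sa sc m n g = (segments (syllables g) sa sc m n).card := by
  unfold segCount2 segments
  congr

theorem segCount2_comm_of_isCPalindrome {ι : Type*} {M : ι → Type*} [∀ i, Group (M i)]
    {sa sc : Σ i, M i} {g : CoprodI M} (hg : IsCPalindrome {sa, sc} g) (m n : ℕ) :
    segCount2 sa sc m n g = segCount2 sa sc n m g := by
  rw [segCount2_eq_card_segments, segCount2_eq_card_segments,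
    segments_congr (List.length_reverse ..).symm hg, card_segments_reverse]

theorem Delta2_eq_zero_of_CPalindrome_general {M : Bool → Type*} [∀ b, Group (M b)]
    (a c : M true) (g : CoprodI M)
    (hg : IsCPalindrome {⟨true, a⟩, ⟨true, c⟩} g) :
    (∀ m n : ℕ, m ≠ n →
      segCount2 ⟨true, a⟩ ⟨true, c⟩ m n g = segCount2 ⟨true, a⟩ ⟨true, c⟩ n m g) ∧
    Delta2 ⟨true, a⟩ ⟨true, c⟩ g = 0 := by
  refine ⟨fun m n _ => segCount2_comm_of_isCPalindrome hg m n, ?_⟩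
  refine finsum_eq_zero_of_forall_eq_zero fun p => ?_
  rw [segCount2_comm_of_isCPalindrome hg p.1 p.2, sub_self, ite_self]

/-- If `g` is an `{a,c}`-palindrome (in particular a palindrome) then
`d_{m,n}(g) = d_{n,m}(g)` for all `m ≠ n`, hence `Δ₂(g) = 0`. -/
theorem Delta2_eq_zero_of_CPalindrome {M : Bool → Type*} [∀ b, Group (M b)]
    [Nontrivial (M true)] [Nontrivial (M false)]
    (a c : M true) (ha : a ≠ 1) (hc : c ≠ 1) (hac : a ≠ c) (g : CoprodI M)
    (hg : IsCPalindrome {⟨true, a⟩, ⟨true, c⟩} g) :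
    (∀ m n : ℕ, m ≠ n →
      segCount2 ⟨true, a⟩ ⟨true, c⟩ m n g = segCount2 ⟨true, a⟩ ⟨true, c⟩ n m g) ∧
    Delta2 ⟨true, a⟩ ⟨true, c⟩ g = 0 :=
  Delta2_eq_zero_of_CPalindrome_general a c g hg
end

section
/- Let G = A * B be a free product with |A| ≥ 3, |B| ≥ 2, and suppose neither A nor B contains an element of order at least 3. Then the palindromic width of G is infinite. -/
open Monoid Monoid.CoprodI

attribute [local instance] Classical.propDecidable

/-!
Write `F_w(x)` for the number of occurrences of a word `w` in a list `x` minus the number of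
occurrences of `w` reversed. Under concatenation `F_w` is additive up to `O(|w|)`, and it is odd
under reversal. When every letter is an involution, the reduced word of `u * v` is obtained from
those of `u` and `v` by cancelling a block `s` at the end of `u` against `s` reversed at the start
of `v` and merging at most one pair of letters; hence `g ↦ F_w (syllables g)` is a quasimorphism.
It vanishes on palindromes, so it is `O(k)` on products of `k` palindromes. For the pattern
`w = a₁ c a₁ c a₂ c a₁ c a₂ c a₂ c` the reversal of `w` never occurs in a power of `w`, so
`F_w (wⁿ) ≥ n` is unbounded.
-/

namespace List

variable {α : Type*}

noncomputable def infixOccurrences (w L : List α) : Finset ℕ :=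
  (Finset.range (L.length + 1)).filter fun i => w <+: L.drop i

noncomputable def infixCount (w L : List α) : ℕ := (infixOccurrences w L).card

theorem mem_infixOccurrences {w L : List α} {i : ℕ} :
    i ∈ infixOccurrences w L ↔ i ≤ L.length ∧ w <+: L.drop i := by
  simp [infixOccurrences]

theorem add_length_le_of_mem_infixOccurrences {w L : List α} {i : ℕ} (hw : w ≠ [])
    (h : i ∈ infixOccurrences w L) : i + w.length ≤ L.length := by
  have hlen := (mem_infixOccurrences.1 h).2.length_le
  have := length_pos_iff.2 hw
  simp only [length_drop] at hlen
  omega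

theorem infixCount_eq_zero_iff {w L : List α} : infixCount w L = 0 ↔ ¬ w <:+: L := by
  simp only [infixCount, Finset.card_eq_zero, Finset.eq_empty_iff_forall_notMem,
    mem_infixOccurrences, infix_iff_prefix_suffix, not_exists, not_and]
  refine ⟨fun h t hwt ht => ?_, fun h i _ hwi => h _ hwi (drop_suffix i L)⟩
  rw [suffix_iff_eq_drop] at ht
  exact h _ (Nat.sub_le _ _) (ht ▸ hwt)

theorem infixCount_add_infixCount_le (w x y : List α) (hw : w ≠ []) :
    infixCount w x + infixCount w y ≤ infixCount w (x ++ y) := by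
  have hinj : Function.Injective (x.length + ·) := fun a b h => by simpa using h
  have hdisj : _root_.Disjoint (infixOccurrences w x) ((infixOccurrences w y).map ⟨_, hinj⟩) := by
    refine Finset.disjoint_left.2 fun i hi hi' => ?_
    have := add_length_le_of_mem_infixOccurrences hw hi
    have := length_pos_iff.2 hw
    obtain ⟨j, _, rfl⟩ := Finset.mem_map.1 hi'
    simp only [Function.Embedding.coeFn_mk] at this
    omega
  have hsub : infixOccurrences w x ∪ (infixOccurrences w y).map ⟨_, hinj⟩ ⊆
      infixOccurrences w (x ++ y) := by
    intro i hi
    rcases Finset.mem_union.1 hi with hi | hi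
    · rw [mem_infixOccurrences] at hi ⊢
      refine ⟨by simp; omega, ?_⟩
      rw [drop_append_of_le_length hi.1]
      exact prefix_append_of_prefix hi.2
    · obtain ⟨j, hj, rfl⟩ := Finset.mem_map.1 hi
      rw [mem_infixOccurrences] at hj ⊢
      refine ⟨by simp; omega, ?_⟩
      simpa using hj.2
  simpa [infixCount, Finset.card_union_of_disjoint hdisj] using Finset.card_le_card hsub

theorem infixCount_append_le (w x y : List α) :
    infixCount w (x ++ y) ≤ infixCount w x + infixCount w y + w.length := by
  have hsub : infixOccurrences w (x ++ y) ⊆ infixOccurrences w x ∪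
      (infixOccurrences w y).image (x.length + ·) ∪
        Finset.Ico (x.length + 1 - w.length) x.length := by
    intro i hi
    rw [mem_infixOccurrences] at hi
    simp only [Finset.mem_union, Finset.mem_Ico, Finset.mem_image, mem_infixOccurrences]
    rcases le_or_gt x.length i with hxi | hxi
    · refine Or.inl (Or.inr ⟨i - x.length, ⟨by simp at hi; omega, ?_⟩, by omega⟩)
      rw [drop_append, drop_of_length_le hxi, nil_append] at hi
      exact hi.2
    · rcases le_or_gt (i + w.length) x.length with hiw | hiw
      · refine Or.inl (Or.inl ⟨hxi.le, ?_⟩)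
        rw [drop_append_of_le_length hxi.le] at hi
        exact prefix_of_prefix_length_le hi.2 (prefix_append _ _) (by simp; omega)
      · exact Or.inr ⟨by omega, hxi⟩
  calc infixCount w (x ++ y)
      ≤ (infixOccurrences w x ∪ (infixOccurrences w y).image (x.length + ·)).card +
        (Finset.Ico (x.length + 1 - w.length) x.length).card :=
        (Finset.card_le_card hsub).trans (Finset.card_union_le _ _)
    _ ≤ infixCount w x + infixCount w y + w.length := by
      have := Finset.card_union_le (infixOccurrences w x)
        ((infixOccurrences w y).image (x.length + ·))
      have := Finset.card_image_le (f := (x.length + ·)) (s := infixOccurrences w y)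
      rw [Nat.card_Ico]
      unfold infixCount
      omega

theorem prefix_drop_reverse_iff {w L : List α} {i : ℕ} (hi : i + w.length ≤ L.length) :
    w <+: L.reverse.drop i ↔ w.reverse <+: L.drop (L.length - w.length - i) := by
  rw [← reverse_suffix, reverse_drop, reverse_reverse, length_reverse, suffix_iff_eq_drop,
    prefix_iff_eq_take, length_take, length_reverse, drop_take, min_eq_left (by omega),
    show L.length - i - w.length = L.length - w.length - i by omega,
    show L.length - i - (L.length - w.length - i) = w.length by omega]

theorem infixCount_reverse (w L : List α) (hw : w ≠ []) :
    infixCount w L.reverse = infixCount w.reverse L := by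
  have hw' : w.reverse ≠ [] := by simpa using hw
  apply Finset.card_bij' (fun i _ => L.length - w.length - i) (fun j _ => L.length - w.length - j)
  · intro i hi
    have hb := add_length_le_of_mem_infixOccurrences hw hi
    rw [length_reverse] at hb
    rw [mem_infixOccurrences, length_reverse] at hi
    rw [mem_infixOccurrences, ← prefix_drop_reverse_iff hb]
    exact ⟨by omega, hi.2⟩
  · intro j hj
    have hb := add_length_le_of_mem_infixOccurrences hw' hj
    rw [length_reverse] at hb
    rw [mem_infixOccurrences] at hj
    rw [mem_infixOccurrences, length_reverse, prefix_drop_reverse_iff (by omega),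
      show L.length - w.length - (L.length - w.length - j) = j by omega]
    exact ⟨by omega, hj.2⟩
  · intro i hi
    have hb := add_length_le_of_mem_infixOccurrences hw hi
    rw [length_reverse] at hb
    omega
  · intro j hj
    have hb := add_length_le_of_mem_infixOccurrences hw' hj
    rw [length_reverse] at hb
    omega

theorem le_infixCount_flatten_replicate {w : List α} (hw : w ≠ []) (n : ℕ) :
    n ≤ infixCount w (replicate n w).flatten := by
  induction n with
  | zero => exact Nat.zero_le _
  | succ n ih =>
    have hself : 1 ≤ infixCount w w :=
      Finset.one_le_card.2 ⟨0, mem_infixOccurrences.2 ⟨Nat.zero_le _, prefix_refl w⟩⟩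
    rw [replicate_succ, flatten_cons]
    have := infixCount_add_infixCount_le w w (replicate n w).flatten hw
    omega

theorem not_infix_flatten_replicate {v P : List α} (hv : v.length ≤ P.length)
    (hPP : ¬ v <:+: P ++ P) (n : ℕ) : ¬ v <:+: (replicate n P).flatten := by
  have hprefix : ∀ {l : List α} (m : ℕ), l <+: (replicate m P).flatten → l.length ≤ P.length →
      l <+: P := by
    rintro l (_ | m) hl hlen
    · simp_all
    · rw [replicate_succ, flatten_cons] at hl
      exact prefix_of_prefix_length_le hl (prefix_append _ _) hlen
  induction n with
  | zero => simpa using fun h : v = [] => hPP (h ▸ nil_infix)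
  | succ n ih =>
    rw [replicate_succ, flatten_cons, infix_append_iff]
    rintro (h | h | ⟨l₁, l₂, rfl, h₁, h₂⟩)
    · exact hPP (h.trans (prefix_append P P).isInfix)
    · exact ih h
    · refine hPP (infix_append_iff.2 (Or.inr (Or.inr ⟨l₁, l₂, rfl, h₁, hprefix n h₂ ?_⟩)))
      simp only [length_append] at hv
      omega

noncomputable def brooksCount (w L : List α) : ℤ := infixCount w L - infixCount w.reverse L

theorem brooksCount_reverse {w : List α} (hw : w ≠ []) (L : List α) :
    brooksCount w L.reverse = -brooksCount w L := by
  have h₁ := infixCount_reverse w L hw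
  have h₂ := infixCount_reverse w.reverse L (by simpa using hw)
  rw [reverse_reverse] at h₂
  simp only [brooksCount, h₁, h₂]
  ring

theorem brooksCount_of_length_lt {w L : List α} (h : L.length < w.length) :
    brooksCount w L = 0 := by
  have hL : ∀ v : List α, v.length = w.length → infixCount v L = 0 := fun v hv =>
    infixCount_eq_zero_iff.2 fun hvL => by have := hvL.length_le; omega
  simp [brooksCount, hL w rfl, hL w.reverse length_reverse]

theorem abs_brooksCount_append_sub_le {w : List α} (hw : w ≠ []) (x y : List α) :
    |brooksCount w (x ++ y) - brooksCount w x - brooksCount w y| ≤ 2 * w.length := by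
  have h₁ := infixCount_add_infixCount_le w x y hw
  have h₂ := infixCount_append_le w x y
  have h₃ := infixCount_add_infixCount_le w.reverse x y (by simpa using hw)
  have h₄ := infixCount_append_le w.reverse x y
  rw [length_reverse] at h₄
  rw [abs_le]
  unfold brooksCount
  omega

theorem abs_brooksCount_append_append_sub_le {w : List α} (hw : w ≠ []) (x m y : List α)
    (hm : m.length < w.length) :
    |brooksCount w (x ++ m ++ y) - brooksCount w x - brooksCount w y| ≤ 4 * w.length := by
  have h₁ := abs_brooksCount_append_sub_le hw (x ++ m) y
  have h₂ := abs_brooksCount_append_sub_le hw x m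
  have h₃ := brooksCount_of_length_lt hm
  rw [abs_le] at *
  omega

theorem le_brooksCount_flatten_replicate {w : List α} (hw : ¬ w.reverse <:+: w ++ w) (n : ℕ) :
    n ≤ brooksCount w (replicate n w).flatten := by
  have hne : w ≠ [] := by rintro rfl; simp at hw
  have h₁ := le_infixCount_flatten_replicate hne n
  have h₂ := infixCount_eq_zero_iff.2 (not_infix_flatten_replicate length_reverse.le hw n)
  simp only [brooksCount, h₂]
  omega

end List

theorem abs_prod_le_mul_length_of_quasimorphism {G : Type*} [Monoid G] {f : G → ℤ} {D : ℤ}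
    (hf : ∀ g h, |f (g * h) - f g - f h| ≤ D) (hf₁ : f 1 = 0) {L : List G}
    (hL : ∀ p ∈ L, f p = 0) : |f L.prod| ≤ D * L.length := by
  induction L with
  | nil => simp [hf₁]
  | cons p L ih =>
    have hp := hL p List.mem_cons_self
    have hprod := ih fun q hq => hL q (List.mem_cons_of_mem p hq)
    have hpL := hf p L.prod
    rw [List.prod_cons, List.length_cons, Nat.cast_succ]
    rw [hp, abs_le] at hpL
    rw [abs_le] at hprod ⊢
    constructor <;> linarith

namespace Monoid.CoprodI

variable {ι : Type*} {M : ι → Type*} [∀ i, Monoid (M i)]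

/-- `r` arises from `u ++ w` by cancelling a block `s` against `s.reverse` at the seam and then
merging at most one pair of letters: this is how reduced words multiply when all letters are
involutions. -/
inductive Splice : List (Σ i, M i) → List (Σ i, M i) → List (Σ i, M i) → Prop
  | cancel (s v : List (Σ i, M i)) : Splice s (s.reverse ++ v) v
  | merge (s v : List (Σ i, M i)) {ℓ : ι} (y z : M ℓ) :
      Splice (⟨ℓ, y⟩ :: s) (s.reverse ++ ⟨ℓ, z⟩ :: v) (⟨ℓ, y * z⟩ :: v)
  | cons (x : Σ i, M i) {u w r : List (Σ i, M i)} : Splice u w r → Splice (x :: u) w (x :: r)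

namespace Splice

theorem eq_reverse_append_of_head_ne {u w r : List (Σ i, M i)} (h : Splice u w r)
    (hne : u.head?.map Sigma.fst ≠ r.head?.map Sigma.fst) : w = u.reverse ++ r := by
  cases h with
  | cancel => rfl
  | merge => simp at hne
  | cons => simp at hne

theorem exists_decomposition {u w r : List (Σ i, M i)} (h : Splice u w r) :
    ∃ u₁ s v m₁ m₂ m₃ : List (Σ i, M i), u = u₁ ++ m₁ ++ s ∧ w = s.reverse ++ m₂ ++ v ∧
      r = u₁ ++ m₃ ++ v ∧ m₁.length ≤ 1 ∧ m₂.length ≤ 1 ∧ m₃.length ≤ 1 := by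
  induction h with
  | cancel s v => exact ⟨[], s, v, [], [], [], by simp, by simp, by simp, by simp⟩
  | merge s v y z =>
    exact ⟨[], s, v, [⟨_, y⟩], [⟨_, z⟩], [⟨_, y * z⟩], by simp, by simp, by simp, by simp⟩
  | cons x _ ih =>
    obtain ⟨u₁, s, v, m₁, m₂, m₃, rfl, rfl, rfl, hm⟩ := ih
    exact ⟨x :: u₁, s, v, m₁, m₂, m₃, by simp, rfl, by simp, hm⟩

theorem abs_brooksCount_sub_le {u w r p : List (Σ i, M i)} (h : Splice u w r)
    (hp : 2 ≤ p.length) :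
    |List.brooksCount p r - List.brooksCount p u - List.brooksCount p w| ≤ 12 * p.length := by
  obtain ⟨u₁, s, v, m₁, m₂, m₃, rfl, rfl, rfl, hm₁, hm₂, hm₃⟩ := h.exists_decomposition
  have hne : p ≠ [] := by rintro rfl; simp at hp
  have hu := List.abs_brooksCount_append_append_sub_le hne u₁ m₁ s (by omega)
  have hw := List.abs_brooksCount_append_append_sub_le hne s.reverse m₂ v (by omega)
  have hr := List.abs_brooksCount_append_append_sub_le hne u₁ m₃ v (by omega)
  rw [List.brooksCount_reverse hne] at hw
  rw [abs_le] at *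
  constructor <;> linarith

end Splice

variable [DecidableEq ι] [∀ i, DecidableEq (M i)]

namespace Word

theorem toList_of_smul_of_fstIdx_ne {i : ι} {m : M i} (hm : m ≠ 1) {R : Word M}
    (h : R.fstIdx ≠ some i) : (of m • R).toList = ⟨i, m⟩ :: R.toList := by
  rw [← cons_eq_smul (h1 := h) (h2 := hm), cons_toList]

theorem toList_of_smul_of_toList_eq_cons {i : ι} (m : M i) {z : M i} {t : List (Σ i, M i)}
    {R : Word M} (h : R.toList = ⟨i, z⟩ :: t) :
    (of m • R).toList = if m * z = 1 then t else ⟨i, m * z⟩ :: t := by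
  have hchain := h ▸ R.chain_ne
  rw [List.isChain_cons] at hchain
  let T : Word M := ⟨t, fun l hl => R.ne_one l (h ▸ List.mem_cons_of_mem _ hl), hchain.2⟩
  have hT : T.fstIdx ≠ some i := fstIdx_ne_iff.2 hchain.1
  have hz : z ≠ 1 := R.ne_one _ (h ▸ List.mem_cons_self)
  have hR : R = of z • T := by rw [← cons_eq_smul (h1 := hT) (h2 := hz)]; exact Word.ext h
  rw [hR, ← mul_smul, ← map_mul]
  split_ifs with hmz
  · rw [hmz, map_one, one_smul]
  · rw [← cons_eq_smul (h1 := hT) (h2 := hmz), cons_toList]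

end Word

theorem Splice.smul_of (hM : ∀ (i : ι) (x : M i), x * x = 1) {i : ι} {m : M i} (hm : m ≠ 1)
    {u w : List (Σ i, M i)} {R : Word M} (hu : u.head?.map Sigma.fst ≠ some i)
    (h : Splice u w R.toList) : Splice (⟨i, m⟩ :: u) w (of m • R).toList := by
  by_cases hR : R.fstIdx = some i
  · obtain ⟨⟨j, z⟩, t, hzt⟩ := List.exists_cons_of_ne_nil
      (fun h' => by simp [Word.fstIdx, h'] at hR : R.toList ≠ [])
    obtain rfl : j = i := by simpa [Word.fstIdx, hzt] using hR
    have hw : w = u.reverse ++ ⟨j, z⟩ :: t :=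
      hzt ▸ h.eq_reverse_append_of_head_ne (by rw [hzt]; simpa using hu)
    rw [Word.toList_of_smul_of_toList_eq_cons m hzt, hw]
    split_ifs with hmz
    · obtain rfl : z = m := by
        calc z = m * m * z := by rw [hM, one_mul]
          _ = m := by rw [mul_assoc, hmz, mul_one]
      simpa using Splice.cancel (⟨j, z⟩ :: u) t
    · exact Splice.merge u t m z
  · rw [Word.toList_of_smul_of_fstIdx_ne hm hR]
    exact h.cons _

theorem splice_toList_prod_smul (hM : ∀ (i : ι) (x : M i), x * x = 1) (u w : Word M) :
    Splice u.toList w.toList (u.prod • w).toList := by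
  induction u using Word.consRecOn with
  | empty => simpa [Word.prod_empty] using Splice.cancel [] w.toList
  | cons i m u hne hm ih =>
    rw [Word.prod_cons, mul_smul, Word.cons_toList]
    exact ih.smul_of hM hm hne

end Monoid.CoprodI

section Syllables

variable {ι : Type*} {M : ι → Type*} [∀ i, Group (M i)]

theorem syllables_one : syllables (1 : CoprodI M) = [] := by
  simp [syllables, Word.equiv, Word.empty]

theorem splice_syllables_mul (hM : ∀ (i : ι) (x : M i), x * x = 1) (g h : CoprodI M) :
    Splice (syllables g) (syllables h) (syllables (g * h)) := by
  let := Classical.decEq ι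
  let : ∀ i, DecidableEq (M i) := fun _ => Classical.decEq _
  have hmul : (Word.equiv g).prod • Word.equiv h = Word.equiv (g * h) := by
    rw [show (Word.equiv g).prod = g from Word.equiv.symm_apply_apply g]
    exact (mul_smul g h (Word.empty : Word M)).symm
  have := splice_toList_prod_smul hM (Word.equiv g) (Word.equiv h)
  rwa [hmul] at this

theorem brooksCount_syllables_of_isPalindrome {w : List (Σ i, M i)} (hw : w ≠ [])
    {p : CoprodI M} (hp : IsPalindrome p) : List.brooksCount w (syllables p) = 0 := by
  have := List.brooksCount_reverse hw (syllables p)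
  rw [hp] at this
  omega

theorem abs_brooksCount_syllables_list_prod_le (hM : ∀ (i : ι) (x : M i), x * x = 1)
    {w : List (Σ i, M i)} (hw : 2 ≤ w.length) {L : List (CoprodI M)}
    (hL : ∀ p ∈ L, IsPalindrome p) :
    |List.brooksCount w (syllables L.prod)| ≤ 12 * w.length * L.length := by
  have hne : w ≠ [] := by rintro rfl; simp at hw
  have hone : List.brooksCount w (syllables (1 : CoprodI M)) = 0 := by
    rw [syllables_one]
    exact List.brooksCount_of_length_lt (by simp; omega)
  exact abs_prod_le_mul_length_of_quasimorphism (f := fun g => List.brooksCount w (syllables g))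
    (fun g h => (splice_syllables_mul hM g h).abs_brooksCount_sub_le hw) hone
    (fun p hp => brooksCount_syllables_of_isPalindrome hne (hL p hp))

end Syllables

section BoolIndexed

variable {M : Bool → Type*}

/-- The letters from `M true` read `a₁ a₁ a₂ a₁ a₂ a₂`, the shortest binary necklace that differs
from its reversal; this is why the reversed pattern never occurs in a power of the pattern. -/
def brooksPattern (a₁ a₂ : M true) (c : M false) : List (Σ b, M b) :=
  [⟨true, a₁⟩, ⟨false, c⟩, ⟨true, a₁⟩, ⟨false, c⟩, ⟨true, a₂⟩, ⟨false, c⟩,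
    ⟨true, a₁⟩, ⟨false, c⟩, ⟨true, a₂⟩, ⟨false, c⟩, ⟨true, a₂⟩, ⟨false, c⟩]

theorem not_reverse_infix_brooksPattern_append_self {a₁ a₂ : M true} (ha : a₁ ≠ a₂)
    (c : M false) :
    ¬ (brooksPattern a₁ a₂ c).reverse <:+: brooksPattern a₁ a₂ c ++ brooksPattern a₁ a₂ c := by
  -- relabelling the letters by `0, 1, 2` turns this into a decidable statement about `List ℕ`
  let f : (Σ b, M b) → ℕ := fun x =>
    if x = ⟨true, a₁⟩ then 0 else if x = ⟨true, a₂⟩ then 1 else 2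
  intro h
  have := h.map f
  simp only [brooksPattern, List.reverse_cons, List.reverse_nil, List.nil_append,
    List.cons_append, List.map_cons, List.map_nil, Sigma.mk.injEq, Bool.false_eq_true, false_and,
    and_false, heq_eq_eq, ha.symm, ↓reduceIte, f] at this
  revert this
  decide

theorem exists_syllables_eq_flatten_replicate_brooksPattern [∀ b, Group (M b)]
    {a₁ a₂ : M true} {c : M false} (ha₁ : a₁ ≠ 1) (ha₂ : a₂ ≠ 1) (hc : c ≠ 1) (n : ℕ) :
    ∃ g : CoprodI M, syllables g = (List.replicate n (brooksPattern a₁ a₂ c)).flatten := by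
  have hne_one : ∀ l ∈ (List.replicate n (brooksPattern a₁ a₂ c)).flatten, l.2 ≠ 1 := by
    intro l hl
    obtain ⟨_, hP, hl⟩ := List.mem_flatten.1 hl
    rw [List.eq_of_mem_replicate hP] at hl
    simp only [brooksPattern, List.mem_cons, List.not_mem_nil, or_false] at hl
    rcases hl with rfl | rfl | rfl | rfl | rfl | rfl | rfl | rfl | rfl | rfl | rfl | rfl <;>
      assumption
  have hchain : (List.replicate n (brooksPattern a₁ a₂ c)).flatten.IsChain
      (fun l l' => l.1 ≠ l'.1) := by
    rw [List.isChain_flatten (by simp [brooksPattern])]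
    refine ⟨fun l hl => ?_, List.isChain_replicate_of_rel n (by simp [brooksPattern])⟩
    rw [List.eq_of_mem_replicate hl]
    simp [brooksPattern]
  let := Classical.decEq Bool
  let : ∀ b, DecidableEq (M b) := fun _ => Classical.decEq _
  let W : Word M := ⟨_, hne_one, hchain⟩
  exact ⟨W.prod, congrArg Word.toList (Word.equiv.apply_symm_apply W)⟩

end BoolIndexed

/-- If `|A| ≥ 3`, `|B| ≥ 2` and neither `A` nor `B` contains an element of
order at least 3, then the palindromic width of `A * B` is infinite. -/
theorem palindromic_width_infinite_of_exponent_two {M : Bool → Type*} [∀ b, Group (M b)]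
    (hA : 3 ≤ Cardinal.mk (M true)) (hB : 2 ≤ Cardinal.mk (M false))
    (hA2 : ∀ x : M true, x * x = 1) (hB2 : ∀ x : M false, x * x = 1) :
    ∀ k : ℕ, ∃ g : CoprodI M, ¬ ∃ L : List (CoprodI M),
      L.length ≤ k ∧ (∀ p ∈ L, IsPalindrome p) ∧ L.prod = g := by
  intro k
  obtain ⟨a₁, ha₁⟩ := (Cardinal.two_le_iff' (1 : M true)).1 (le_trans (by norm_num) hA)
  obtain ⟨a₂, ha₂, ha₂₁⟩ := Cardinal.exists_ne_ne_of_three_le hA 1 a₁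
  obtain ⟨c, hc⟩ := (Cardinal.two_le_iff' (1 : M false)).1 hB
  have hM : ∀ (b : Bool) (x : M b), x * x = 1 := Bool.forall_bool.2 ⟨hB2, hA2⟩
  set P := brooksPattern a₁ a₂ c
  have hP : P.length = 12 := rfl
  obtain ⟨g, hg⟩ := exists_syllables_eq_flatten_replicate_brooksPattern ha₁ ha₂ hc (144 * k + 1)
  refine ⟨g, fun ⟨L, hLk, hL, hLg⟩ => ?_⟩
  have hlower := List.le_brooksCount_flatten_replicate
    (not_reverse_infix_brooksPattern_append_self ha₂₁.symm c) (144 * k + 1)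
  have hupper := abs_brooksCount_syllables_list_prod_le hM (w := P) (by omega) hL
  rw [hLg, hg, hP] at hupper
  have := (abs_le.1 hupper).2
  push_cast at hlower this
  have : (L.length : ℤ) ≤ k := by exact_mod_cast hLk
  linarith
end
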